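/- arXiv:2009.01677 — 8 statements merged into one kernel-verified Lean document; each statement's English description precedes it below -/
import Mathlib

section
/- For every integer n ≥ 1, the number of distinct n×n matrices over ℤ/3ℤ of the form (zg,f)_n − (zg,f)_nᵀ, where g, f range over all formal power series over ℤ/3ℤ with constant term of f equal to 0, and (zg,f)_n denotes the n×n matrix whose (i,j)-entry (0 ≤ i,j ≤ n−1) is the coefficient of z^i in z·g·f^j, equals (3^{2(n−1)} + 3)/4. -/
/-!
Since `A = (zg, f)_n` is strictly lower triangular, `A - Aᵀ` determines `A`, so it suffices to
count the arrays themselves. With `m = n - 1`, row `k + 1` of `A` lists the coefficients of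
`z^k` in `g f^j`, so `A` only depends on `g mod z^m` and, when `g = z^d u` with `u(0) ≠ 0` and
`d < m`, on `f mod z^(m-d)`. Conversely, columns `0` and `1` recover exactly these data:
`g ≡ g'` and `g f ≡ g' f' (mod z^m)` give `z^d u (f - f') ≡ 0`, and `u` is invertible. So the
arrays correspond to the zero array together with the triples `(d, u mod z^(m-d), f mod z^(m-d))`,
which over `𝔽_q` number `1 + ∑_{k<m} (q - 1) q^(2k) = (q^(2m) + q) / (q + 1)`.
-/

open PowerSeries Matrix

/-- The `n × n` matrix `(zg, f)_n` whose `(i,j)`-entry (0-indexed) is the coefficient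
of `z^i` in `z·g·f^j`. -/
noncomputable def riordanMat (n : ℕ) (g f : PowerSeries (ZMod 3)) :
    Matrix (Fin n) (Fin n) (ZMod 3) :=
  Matrix.of fun i j => coeff (i : ℕ) (X * g * f ^ (j : ℕ))

namespace PowerSeries

section CommRing

variable {R : Type*} [CommRing R]

theorem X_pow_dvd_mul_pow_sub_mul_pow {d m : ℕ} {g g' f f' : R⟦X⟧} (hdm : d ≤ m)
    (hg : X ^ d ∣ g) (hgg' : X ^ m ∣ g - g') (hff' : X ^ (m - d) ∣ f - f') (j : ℕ) :
    X ^ m ∣ g * f ^ j - g' * f' ^ j := by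
  rw [show g * f ^ j - g' * f' ^ j = g * (f ^ j - f' ^ j) + (g - g') * f' ^ j by ring]
  refine dvd_add ?_ (dvd_mul_of_dvd_left hgg' _)
  rw [← pow_mul_pow_sub X hdm]
  exact mul_dvd_mul hg (hff'.trans (sub_dvd_pow_sub_pow f f' j))

theorem X_pow_sub_dvd_of_X_pow_dvd_X_pow_mul {d m : ℕ} {p : R⟦X⟧} (hdm : d ≤ m)
    (h : X ^ m ∣ X ^ d * p) : X ^ (m - d) ∣ p := by
  obtain ⟨c, hc⟩ := h
  rw [← pow_mul_pow_sub X hdm, mul_assoc] at hc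
  exact ⟨c, X_pow_mul_cancel hc⟩

theorem X_pow_sub_dvd_sub_of_X_pow_dvd_mul_sub {d m : ℕ} {u f f' g' : R⟦X⟧} (hdm : d ≤ m)
    (hu : IsUnit (constantCoeff u)) (hgg' : X ^ m ∣ X ^ d * u - g')
    (hgf : X ^ m ∣ X ^ d * u * f - g' * f') :
    X ^ (m - d) ∣ f - f' := by
  have h : X ^ m ∣ X ^ d * (u * (f - f')) := by
    have := dvd_sub hgf (dvd_mul_of_dvd_left hgg' f')
    rwa [show X ^ d * u * f - g' * f' - (X ^ d * u - g') * f' = X ^ d * (u * (f - f')) by ring]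
      at this
  exact (isUnit_iff_constantCoeff.mpr hu).dvd_mul_left.mp
    (X_pow_sub_dvd_of_X_pow_dvd_X_pow_mul hdm h)

theorem le_of_X_pow_dvd_X_pow_mul_sub {d d' m : ℕ} {u u' : R⟦X⟧} (hu : constantCoeff u ≠ 0)
    (hdm : d < m) (h : X ^ m ∣ X ^ d * u - X ^ d' * u') : d' ≤ d := by
  by_contra! hlt
  have := (X_pow_dvd_iff.mp h) d hdm
  rw [map_sub, coeff_X_pow_mul', coeff_X_pow_mul', if_pos le_rfl, if_neg (by omega), Nat.sub_self,
    coeff_zero_eq_constantCoeff, sub_zero] at this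
  exact hu this

theorem exists_eq_X_pow_mul_of_not_X_pow_dvd {m : ℕ} {g : R⟦X⟧} (h : ¬ X ^ m ∣ g) :
    ∃ d < m, ∃ u : R⟦X⟧, constantCoeff u ≠ 0 ∧ g = X ^ d * u := by
  have hg : g ≠ 0 := by
    rintro rfl
    exact h (dvd_zero _)
  refine ⟨g.order.toNat, ?_, divXPowOrder g, ?_, X_pow_order_mul_divXPowOrder.symm⟩
  · by_contra! hm
    exact h ((pow_dvd_pow X hm).trans X_pow_order_dvd)
  · rwa [Ne, constantCoeff_divXPowOrder_eq_zero_iff]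

end CommRing

section Ring

variable {R : Type*} [Ring R]

def ofFn {n : ℕ} (v : Fin n → R) : R⟦X⟧ :=
  mk fun i => if h : i < n then v ⟨i, h⟩ else 0

theorem coeff_ofFn {n : ℕ} (v : Fin n → R) (i : Fin n) : coeff i (ofFn v) = v i := by
  simp [ofFn]

theorem constantCoeff_ofFn_cons {n : ℕ} (c : R) (a : Fin n → R) :
    constantCoeff (ofFn (Fin.cons c a : Fin (n + 1) → R)) = c := by
  rw [← coeff_zero_eq_constantCoeff_apply]
  exact (coeff_ofFn _ 0).trans (Fin.cons_zero _ _)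

theorem X_pow_succ_dvd_ofFn_cons_sub (k : ℕ) (p : R⟦X⟧) :
    X ^ (k + 1) ∣ ofFn (Fin.cons (constantCoeff p) fun i : Fin k => coeff (i + 1) p) - p := by
  refine X_pow_dvd_iff.mpr fun i hi => ?_
  rw [map_sub, coeff_ofFn _ ⟨i, hi⟩, sub_eq_zero]
  cases i with
  | zero => exact (Fin.cons_zero _ _).trans (coeff_zero_eq_constantCoeff_apply p).symm
  | succ i => exact Fin.cons_succ (α := fun _ => R) _ _ ⟨i, by omega⟩

theorem eq_of_X_pow_dvd_ofFn_sub_ofFn {n : ℕ} {v w : Fin n → R}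
    (h : X ^ n ∣ ofFn v - ofFn w) : v = w := by
  funext i
  have := (X_pow_dvd_iff.mp h) i i.isLt
  rwa [map_sub, coeff_ofFn, coeff_ofFn, sub_eq_zero] at this

end Ring

end PowerSeries

theorem Matrix.eq_of_sub_transpose_eq {n α : Type*} [LinearOrder n] [AddGroup α]
    {A B : Matrix n n α} (hA : ∀ i j, i ≤ j → A i j = 0) (hB : ∀ i j, i ≤ j → B i j = 0)
    (h : A - Aᵀ = B - Bᵀ) : A = B := by
  ext i j
  rcases le_or_gt i j with hij | hji
  · rw [hA i j hij, hB i j hij]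
  · simpa [hA j i hji.le, hB j i hji.le] using congrFun₂ h i j

section RiordanArray

variable {R : Type*} [CommRing R]

noncomputable def riordanArray (n : ℕ) (g f : R⟦X⟧) : Matrix (Fin n) (Fin n) R :=
  of fun i j => coeff i (X * g * f ^ (j : ℕ))

theorem riordanArray_apply_of_le {n : ℕ} {g f : R⟦X⟧} (hf : constantCoeff f = 0) {i j : Fin n}
    (hij : i ≤ j) : riordanArray n g f i j = 0 := by
  have hdvd : (X : R⟦X⟧) ^ ((j : ℕ) + 1) ∣ X * g * f ^ (j : ℕ) := by
    rw [pow_succ']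
    exact mul_dvd_mul (dvd_mul_right X g) (pow_dvd_pow_of_dvd (X_dvd_iff.mpr hf) _)
  exact X_pow_dvd_iff.mp hdvd i (Nat.lt_succ_of_le hij)

theorem riordanArray_succ_eq_iff {m : ℕ} {g f g' f' : R⟦X⟧} :
    riordanArray (m + 1) g f = riordanArray (m + 1) g' f' ↔
      ∀ j ≤ m, X ^ m ∣ g * f ^ j - g' * f' ^ j := by
  constructor
  · intro h j hj
    refine X_pow_dvd_iff.mpr fun k hk => ?_
    simpa [riordanArray, mul_assoc, sub_eq_zero] using
      congrFun₂ h (Fin.succ ⟨k, hk⟩) ⟨j, Nat.lt_succ_of_le hj⟩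
  · intro h
    ext i j
    refine Fin.cases ?_ (fun k => ?_) i
    · simp [riordanArray, mul_assoc]
    · simpa [riordanArray, mul_assoc, sub_eq_zero] using
        X_pow_dvd_iff.mp (h j (Nat.lt_succ_iff.mp j.isLt)) k k.isLt

end RiordanArray

theorem add_one_mul_sum_sub_one_mul_pow_mul_pow_add_one {q : ℕ} (hq : 1 ≤ q) (m : ℕ) :
    (q + 1) * (∑ k ∈ Finset.range m, (q - 1) * (q ^ k * q ^ k) + 1) = q ^ (2 * m) + q := by
  induction m with
  | zero => simp [add_comm]
  | succ m ih =>
    rw [Finset.sum_range_succ, add_right_comm _ ((q - 1) * _), mul_add, ih]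
    obtain ⟨r, rfl⟩ : ∃ r, q = r + 1 := ⟨q - 1, by omega⟩
    rw [Nat.add_sub_cancel]
    ring

section RiordanParam

variable (K : Type*) [Field K]

/-- `none` stands for `g ≡ 0 mod X^m`, and `some ⟨k, c, a, b⟩` for
`g = X^(m-1-k) (c + a₀ X + ⋯ + a_{k-1} X^k)` with `f = b₀ X + ⋯ + b_{k-1} X^k`: the data of a
pair `(g, f)` that its Riordan array of size `m + 1` sees (`g mod X^m` and `f mod X^(k+1)`). -/
abbrev RiordanParam (m : ℕ) : Type _ := Option (Σ k : Fin m, Kˣ × (Fin k → K) × (Fin k → K))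

variable {K}

noncomputable def RiordanParam.toPair {m : ℕ} : RiordanParam K m → K⟦X⟧ × K⟦X⟧
  | none => (0, 0)
  | some ⟨k, c, a, b⟩ => (X ^ (m - 1 - k) * ofFn (Fin.cons (c : K) a), ofFn (Fin.cons 0 b))

theorem RiordanParam.constantCoeff_toPair_snd {m : ℕ} (p : RiordanParam K m) :
    constantCoeff p.toPair.2 = 0 := by
  rcases p with _ | ⟨k, c, a, b⟩
  · exact map_zero _
  · exact constantCoeff_ofFn_cons 0 b

theorem RiordanParam.exists_riordanArray_toPair_eq {m : ℕ} {g f : K⟦X⟧}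
    (hf : constantCoeff f = 0) :
    ∃ p : RiordanParam K m,
      riordanArray (m + 1) p.toPair.1 p.toPair.2 = riordanArray (m + 1) g f := by
  by_cases hg : X ^ m ∣ g
  · refine ⟨none, riordanArray_succ_eq_iff.mpr fun j _ => ?_⟩
    refine X_pow_dvd_mul_pow_sub_mul_pow le_rfl (dvd_zero _) ?_ ?_ j
    · rwa [zero_sub, dvd_neg]
    · rw [Nat.sub_self, pow_zero]
      exact one_dvd _
  obtain ⟨d, hdm, u, hu, rfl⟩ := exists_eq_X_pow_mul_of_not_X_pow_dvd hg
  refine ⟨some ⟨⟨m - 1 - d, by omega⟩, Units.mk0 _ hu, fun i => coeff (i + 1) u,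
    fun i => coeff (i + 1) f⟩, riordanArray_succ_eq_iff.mpr fun j _ => ?_⟩
  have hk : m - 1 - (m - 1 - d) = d := by omega
  have hk' : m - 1 - d + 1 = m - d := by omega
  simp only [RiordanParam.toPair, Units.val_mk0, hk]
  refine X_pow_dvd_mul_pow_sub_mul_pow hdm.le (dvd_mul_right _ _) ?_ ?_ j
  · rw [← mul_sub, ← pow_mul_pow_sub X hdm.le]
    exact mul_dvd_mul_left _ (hk' ▸ X_pow_succ_dvd_ofFn_cons_sub _ u)
  · exact hf ▸ hk' ▸ X_pow_succ_dvd_ofFn_cons_sub _ f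

theorem RiordanParam.not_X_pow_dvd_toPair_fst {m : ℕ} {k : Fin m} (c : Kˣ) (a b : Fin k → K) :
    ¬ X ^ m ∣ (RiordanParam.toPair (some ⟨k, c, a, b⟩ : RiordanParam K m)).1 := by
  intro h
  have := le_of_X_pow_dvd_X_pow_mul_sub (d' := m) (u' := 0)
    ((constantCoeff_ofFn_cons _ a).trans_ne c.ne_zero) (by omega : m - 1 - k < m)
    (by simpa [RiordanParam.toPair] using h)
  omega

theorem RiordanParam.eq_of_riordanArray_toPair_eq {m : ℕ} {p q : RiordanParam K m}
    (h : riordanArray (m + 1) p.toPair.1 p.toPair.2 =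
      riordanArray (m + 1) q.toPair.1 q.toPair.2) :
    p = q := by
  have hg : X ^ m ∣ p.toPair.1 - q.toPair.1 := by
    simpa using riordanArray_succ_eq_iff.mp h 0 (Nat.zero_le m)
  rcases p with _ | ⟨k, c, a, b⟩ <;> rcases q with _ | ⟨k', c', a', b'⟩
  · rfl
  · exact (not_X_pow_dvd_toPair_fst c' a' b' (by simpa [RiordanParam.toPair] using hg)).elim
  · exact (not_X_pow_dvd_toPair_fst c a b (by simpa [RiordanParam.toPair] using hg)).elim
  simp only [RiordanParam.toPair] at hg
  obtain rfl : k = k' := by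
    have h₁ := le_of_X_pow_dvd_X_pow_mul_sub
      ((constantCoeff_ofFn_cons _ a).trans_ne c.ne_zero) (by omega) hg
    have h₂ := le_of_X_pow_dvd_X_pow_mul_sub
      ((constantCoeff_ofFn_cons _ a').trans_ne c'.ne_zero) (by omega) (dvd_sub_comm.mp hg)
    omega
  have hk : m - (m - 1 - k) = k + 1 := by omega
  obtain ⟨hc, rfl⟩ : (c : K) = c' ∧ a = a' := by
    refine Fin.cons_inj.mp (eq_of_X_pow_dvd_ofFn_sub_ofFn ?_)
    have := X_pow_sub_dvd_of_X_pow_dvd_X_pow_mul (d := m - 1 - k) (m := m) (by omega)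
      (by rwa [← mul_sub] at hg)
    rwa [hk] at this
  obtain rfl := Units.ext hc
  obtain rfl : b = b' := by
    refine (Fin.cons_inj (x₀ := (0 : K)) (y₀ := 0)).mp (eq_of_X_pow_dvd_ofFn_sub_ofFn ?_) |>.2
    have hgf := riordanArray_succ_eq_iff.mp h 1 (by omega)
    simp only [RiordanParam.toPair, pow_one] at hgf
    have hu : IsUnit (constantCoeff (ofFn (Fin.cons (c : K) a))) := by
      rw [constantCoeff_ofFn_cons]
      exact c.isUnit
    have := X_pow_sub_dvd_sub_of_X_pow_dvd_mul_sub (by omega) hu hg hgf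
    rwa [hk] at this
  rfl

theorem RiordanParam.card_add_one_mul_card [Fintype K] [DecidableEq K] (m : ℕ) :
    (Fintype.card K + 1) * Fintype.card (RiordanParam K m) =
      Fintype.card K ^ (2 * m) + Fintype.card K := by
  simp only [Fintype.card_option, Fintype.card_sigma, Fintype.card_prod, Fintype.card_fun,
    Fintype.card_units, Fintype.card_fin]
  rw [Fin.sum_univ_eq_sum_range
    (fun k => (Fintype.card K - 1) * (Fintype.card K ^ k * Fintype.card K ^ k)) m]
  exact add_one_mul_sum_sub_one_mul_pow_mul_pow_add_one Fintype.card_pos m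

end RiordanParam

theorem card_add_one_mul_ncard_skew_riordanArray (K : Type*) [Field K] [Fintype K] (n : ℕ) :
    (Fintype.card K + 1) * {S : Matrix (Fin n) (Fin n) K | ∃ g f : K⟦X⟧, constantCoeff f = 0 ∧
        S = riordanArray n g f - (riordanArray n g f)ᵀ}.ncard =
      Fintype.card K ^ (2 * (n - 1)) + Fintype.card K := by
  classical
  rcases n with _ | m
  · have hzero : ∃ g f : K⟦X⟧, constantCoeff f = 0 ∧
        (0 : Matrix (Fin 0) (Fin 0) K) = riordanArray 0 g f - (riordanArray 0 g f)ᵀ :=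
      ⟨0, 0, map_zero _, Subsingleton.elim _ _⟩
    rw [Set.ncard_eq_one.mpr ⟨0, Set.eq_singleton_iff_unique_mem.mpr
      ⟨hzero, fun _ _ => Subsingleton.elim _ _⟩⟩]
    simp [add_comm]
  let skew (p : RiordanParam K m) := riordanArray (m + 1) p.toPair.1 p.toPair.2 -
    (riordanArray (m + 1) p.toPair.1 p.toPair.2)ᵀ
  have hrange : {S : Matrix (Fin (m + 1)) (Fin (m + 1)) K | ∃ g f : K⟦X⟧, constantCoeff f = 0 ∧
      S = riordanArray (m + 1) g f - (riordanArray (m + 1) g f)ᵀ} = Set.range skew := by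
    ext S
    constructor
    · rintro ⟨g, f, hf, rfl⟩
      obtain ⟨p, hp⟩ := RiordanParam.exists_riordanArray_toPair_eq (m := m) (g := g) hf
      exact ⟨p, by simp only [skew, hp]⟩
    · rintro ⟨p, rfl⟩
      exact ⟨_, _, p.constantCoeff_toPair_snd, rfl⟩
  have hinj : Function.Injective skew := fun p q h =>
    RiordanParam.eq_of_riordanArray_toPair_eq <| Matrix.eq_of_sub_transpose_eq
      (fun _ _ => riordanArray_apply_of_le p.constantCoeff_toPair_snd)
      (fun _ _ => riordanArray_apply_of_le q.constantCoeff_toPair_snd) h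
  rw [hrange, ← Nat.card_coe_set_eq, Nat.card_range_of_injective hinj, Nat.card_eq_fintype_card,
    RiordanParam.card_add_one_mul_card, Nat.add_sub_cancel]

theorem num_oriented_riordan_graphs_general (n : ℕ) :
    {S : Matrix (Fin n) (Fin n) (ZMod 3) |
        ∃ g f : PowerSeries (ZMod 3), constantCoeff f = 0 ∧
          S = riordanMat n g f - (riordanMat n g f)ᵀ}.ncard
      = (3 ^ (2 * (n - 1)) + 3) / 4 := by
  have h := card_add_one_mul_ncard_skew_riordanArray (ZMod 3) n
  rw [ZMod.card] at h
  rw [show riordanMat = riordanArray from rfl]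
  omega

/-- The number of distinct `n × n` matrices over `ℤ/3ℤ` of the form
`(zg,f)_n − (zg,f)_nᵀ`, where `g, f` range over all formal power series over `ℤ/3ℤ`
with `f(0) = 0`, equals `(3^{2(n−1)} + 3)/4`. -/
theorem num_oriented_riordan_graphs (n : ℕ) (hn : 1 ≤ n) :
    {S : Matrix (Fin n) (Fin n) (ZMod 3) |
        ∃ g f : PowerSeries (ZMod 3), constantCoeff f = 0 ∧
          S = riordanMat n g f - (riordanMat n g f)ᵀ}.ncard
      = (3 ^ (2 * (n - 1)) + 3) / 4 :=
  num_oriented_riordan_graphs_general n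
end

section
/- Let g, f be formal power series over ℤ/3ℤ with f(0) = 0, and let A be a power series over ℤ/3ℤ such that f = z·A(f), with [z^0]A = 1 and [z^m]A = 0 for all 1 ≤ m ≤ ℓ (for some fixed integer ℓ ≥ 0). Then for every s ≥ 0, every k ∈ {0,1,…,ℓ}, and every integer α ≥ 1: for all vertex labels i, j with 1 ≤ j < i ≤ (k+1)·3^s + 1, one has [z^{i+α(k+1)3^s−2}] g f^{j+α(k+1)3^s−1} = [z^{i−2}] g f^{j−1}. In particular, in the oriented Riordan graph G_n^σ(g,f) the induced subgraph on the vertices {1,…,(k+1)3^s+1} is isomorphic (via the label shift v ↦ v + α(k+1)3^s) to the induced subgraph on {α(k+1)3^s+1,…,(α+1)(k+1)3^s+1}, and likewise the induced subgraph on {1,…,(k+1)3^s} is isomorphic to that on {α(k+1)3^s+1,…,(α+1)(k+1)3^s}; i.e. G_n^σ(g,f) has the fractal property. -/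
/-!
Write `f = z·u` with `u = A(f)`. The hypotheses on `A` say `u ≡ 1 mod z^{ℓ+1}`, and Frobenius in
characteristic 3 upgrades this to `u^{3^s} ≡ 1 mod z^{(ℓ+1)3^s}`, hence `u^M ≡ 1` for every multiple
`M = α(k+1)3^s` of `3^s`. Therefore `g f^{j-1+M} = z^M · g f^{j-1} u^M` agrees with
`z^M · g f^{j-1}` in all coefficients below `M + (ℓ+1)3^s`, and `i - 2 < (k+1)3^s` is in that range.
-/

open PowerSeries

/-- Substitution `A(f)` of a power series `f` into a power series `A`.
When `f(0) = 0`, the coefficient of `z^n` in `A(f)` only involves `f^k` for `k ≤ n`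
(since `f^k` has order `≥ k`), so the finite sum below is the usual composition. -/
noncomputable def psComp {R : Type*} [CommRing R] (A f : PowerSeries R) : PowerSeries R :=
  PowerSeries.mk fun n => ∑ k ∈ Finset.range (n + 1), coeff k A * coeff n (f ^ k)

instance PowerSeries.charP {R : Type*} [CommRing R] (p : ℕ) [CharP R p] : CharP R⟦X⟧ p :=
  charP_of_injective_ringHom C_injective p

theorem dvd_pow_expChar_pow_sub_one {S : Type*} [CommRing S] (p : ℕ) [ExpChar S p]
    {a u : S} (h : a ∣ u - 1) (s : ℕ) : a ^ p ^ s ∣ u ^ p ^ s - 1 := by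
  simpa [sub_pow_expChar_pow] using pow_dvd_pow_of_dvd h (p ^ s)

theorem dvd_pow_sub_one_of_dvd_sub_one {S : Type*} [CommRing S] {a u : S} (h : a ∣ u - 1)
    (n : ℕ) : a ∣ u ^ n - 1 := by
  simpa using h.trans (sub_dvd_pow_sub_pow u 1 n)

namespace PowerSeries

variable {R : Type*} [CommRing R]

theorem X_pow_succ_dvd_psComp_sub_one {A : R⟦X⟧} (f : R⟦X⟧) {ℓ : ℕ} (hA0 : coeff 0 A = 1)
    (hAm : ∀ m : ℕ, 1 ≤ m → m ≤ ℓ → coeff m A = 0) : (X : R⟦X⟧) ^ (ℓ + 1) ∣ psComp A f - 1 := by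
  rw [X_pow_dvd_iff]
  intro m hm
  rcases Nat.eq_zero_or_pos m with rfl | hm0
  · simp [psComp, hA0]
  · rw [map_sub, coeff_one, if_neg hm0.ne', sub_zero, psComp, coeff_mk]
    refine Finset.sum_eq_zero fun c hc => ?_
    rcases Nat.eq_zero_or_pos c with rfl | hc0
    · rw [pow_zero, coeff_one, if_neg hm0.ne', mul_zero]
    · rw [hAm c hc0 (by rw [Finset.mem_range] at hc; omega), zero_mul]

theorem coeff_add_mul_X_pow_mul_of_dvd_sub_one {u : R⟦X⟧} {N : ℕ} (hu : X ^ N ∣ u - 1)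
    (h : R⟦X⟧) (M : ℕ) {a : ℕ} (ha : a < N) : coeff (a + M) (h * (X ^ M * u)) = coeff a h := by
  have hvanish : coeff a (h * (u - 1)) = 0 := X_pow_dvd_iff.mp (hu.mul_left h) a ha
  rw [mul_left_comm, coeff_X_pow_mul, ← sub_eq_zero, ← hvanish, mul_sub, mul_one, map_sub]

end PowerSeries

theorem oriented_riordan_fractal_general (g f A : PowerSeries (ZMod 3)) (ℓ : ℕ)
    (hA0 : coeff 0 A = 1)
    (hAm : ∀ m : ℕ, 1 ≤ m → m ≤ ℓ → coeff m A = 0)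
    (hfA : f = X * psComp A f) :
    ∀ (s k α : ℕ), k ≤ ℓ → 1 ≤ α →
      ∀ i j : ℕ, 1 ≤ j → j < i → i ≤ (k + 1) * 3 ^ s + 1 →
        coeff (i + α * (k + 1) * 3 ^ s - 2)
            (g * f ^ (j + α * (k + 1) * 3 ^ s - 1)) =
          coeff (i - 2) (g * f ^ (j - 1)) := by
  intro s k α hk _ i j hj hji hi
  set u := psComp A f
  set M := α * (k + 1) * 3 ^ s
  have hu : (X : (ZMod 3)⟦X⟧) ^ ((ℓ + 1) * 3 ^ s) ∣ u ^ M - 1 := by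
    have hfrob := dvd_pow_expChar_pow_sub_one 3 (X_pow_succ_dvd_psComp_sub_one f hA0 hAm) s
    rw [← pow_mul] at hfrob
    simpa only [M, mul_comm _ (3 ^ s), pow_mul] using
      dvd_pow_sub_one_of_dvd_sub_one hfrob (α * (k + 1))
  have hfM : f ^ M = X ^ M * u ^ M := by rw [hfA, mul_pow]
  have hlt : i - 2 < (ℓ + 1) * 3 ^ s := by
    have : (k + 1) * 3 ^ s ≤ (ℓ + 1) * 3 ^ s := Nat.mul_le_mul_right _ (by omega)
    omega
  rw [show i + M - 2 = i - 2 + M by omega, show j + M - 1 = j - 1 + M by omega, pow_add, hfM,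
    ← mul_assoc, coeff_add_mul_X_pow_mul_of_dvd_sub_one hu _ _ hlt]

/-- Fractal property of oriented Riordan graphs: let `g, f, A` be power series over
`ℤ/3ℤ` with `f(0) = 0`, `f = z·A(f)`, `[z^0]A = 1` and `[z^m]A = 0` for `1 ≤ m ≤ ℓ`.
Then for every `s ≥ 0`, `k ≤ ℓ` and `α ≥ 1`, and all vertex labels
`1 ≤ j < i ≤ (k+1)·3^s + 1`, the skew-adjacency entries satisfy
`r (i+α(k+1)3^s) (j+α(k+1)3^s) = r i j` where `r i j = [z^{i−2}] g f^{j−1}`;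
i.e. the label shift `v ↦ v + α(k+1)3^s` is an isomorphism
`⟨{1,…,(k+1)3^s+1}⟩ ≅ ⟨{α(k+1)3^s+1,…,(α+1)(k+1)3^s+1}⟩` (and restricting to
`i ≤ (k+1)3^s` gives `⟨{1,…,(k+1)3^s}⟩ ≅ ⟨{α(k+1)3^s+1,…,(α+1)(k+1)3^s}⟩`). -/
theorem oriented_riordan_fractal (g f A : PowerSeries (ZMod 3)) (ℓ : ℕ)
    (hf : constantCoeff f = 0)
    (hA0 : coeff 0 A = 1)
    (hAm : ∀ m : ℕ, 1 ≤ m → m ≤ ℓ → coeff m A = 0)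
    (hfA : f = X * psComp A f) :
    ∀ (s k α : ℕ), k ≤ ℓ → 1 ≤ α →
      ∀ i j : ℕ, 1 ≤ j → j < i → i ≤ (k + 1) * 3 ^ s + 1 →
        coeff (i + α * (k + 1) * 3 ^ s - 2)
            (g * f ^ (j + α * (k + 1) * 3 ^ s - 1)) =
          coeff (i - 2) (g * f ^ (j - 1)) :=
  oriented_riordan_fractal_general g f A ℓ hA0 hAm hfA
end

section
/- Let g, f be formal power series over ℤ/3ℤ with f(0) = 0, and let A be a power series over ℤ/3ℤ with A(0) ≠ 0 such that f = z·A(f). Write a_k = [z^k]A. Then for all integers i > j ≥ 4, one has [z^{i−2}] g f^{j−1} = Σ_{k=0}^{⌊(i−j−1)/3⌋} a_k · [z^{i−5}] g f^{j−4+3k}. -/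
/-!
Since `f³ = z³·A(f)³`, the left side is `[z^{i−5}] g f^{j−4} A(f)³`. Over `ℤ/3ℤ` cubing is additive
and fixes scalars, so up to any given degree `A(f)³` agrees with `Σ_k a_k f^{3k}`; the terms with
`j − 4 + 3k > i − 5` vanish in degree `i − 5` because `f^m` has order at least `m`.
-/

open PowerSeries

namespace PowerSeries

variable {R : Type*}

instance [Semiring R] (p : ℕ) [ExpChar R p] : ExpChar R⟦X⟧ p :=
  expChar_of_injective_ringHom C_injective p

lemma coeff_mul_pow_eq_zero_of_lt [CommSemiring R] (g : R⟦X⟧) {f : R⟦X⟧}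
    (hf : constantCoeff f = 0) {n k : ℕ} (h : n < k) : coeff n (g * f ^ k) = 0 :=
  X_pow_dvd_iff.mp ((pow_dvd_pow_of_dvd (X_dvd_iff.mpr hf) k).mul_left g) n h

lemma X_pow_dvd_psComp_sub_sum [CommRing R] (A : R⟦X⟧) {f : R⟦X⟧}
    (hf : constantCoeff f = 0) (N : ℕ) :
    X ^ (N + 1) ∣ psComp A f - ∑ k ∈ Finset.range (N + 1), C (coeff k A) * f ^ k := by
  refine X_pow_dvd_iff.mpr fun n hn => ?_
  rw [map_sub, sub_eq_zero, psComp, coeff_mk, map_sum]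
  simp_rw [coeff_C_mul]
  refine Finset.sum_subset (Finset.range_subset_range.mpr hn) fun k _ hk => ?_
  rw [Finset.mem_range, not_lt] at hk
  rw [← one_mul (f ^ k), coeff_mul_pow_eq_zero_of_lt 1 hf hk, mul_zero]

lemma sum_C_mul_pow_pow_char [CommRing R] (p : ℕ) [ExpChar R p]
    (s : Finset ℕ) (c : ℕ → R) (f : R⟦X⟧) :
    (∑ k ∈ s, C (c k) * f ^ k) ^ p = ∑ k ∈ s, C (c k ^ p) * f ^ (p * k) := by
  rw [sum_pow_char]
  refine Finset.sum_congr rfl fun k _ => ?_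
  rw [mul_pow, ← map_pow, ← pow_mul, Nat.mul_comm]

theorem coeff_mul_psComp_pow_prime {p : ℕ} [Fact p.Prime] (h A : (ZMod p)⟦X⟧)
    {f : (ZMod p)⟦X⟧} (hf : constantCoeff f = 0) (n : ℕ) :
    coeff n (h * psComp A f ^ p) =
      ∑ k ∈ Finset.range (n + 1), coeff k A * coeff n (h * f ^ (p * k)) := by
  have htrunc := (X_pow_dvd_psComp_sub_sum A hf n).trans (sub_dvd_pow_sub_pow _ _ p)
  have hcoeff_eq : coeff n (h * psComp A f ^ p) =
      coeff n (h * (∑ k ∈ Finset.range (n + 1), C (coeff k A) * f ^ k) ^ p) := by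
    rw [← sub_eq_zero, ← map_sub, ← mul_sub]
    exact X_pow_dvd_iff.mp (htrunc.mul_left h) n n.lt_succ_self
  rw [hcoeff_eq, sum_C_mul_pow_pow_char p, Finset.mul_sum, map_sum]
  simp_rw [ZMod.pow_card, mul_left_comm h, coeff_C_mul]

end PowerSeries

theorem riordan_decomposition_recurrence_general (g f A : PowerSeries (ZMod 3))
    (hf : constantCoeff f = 0)
    (hfA : f = X * psComp A f)
    (i j : ℕ) (hj : 4 ≤ j) (hij : j < i) :
    coeff (i - 2) (g * f ^ (j - 1)) =
      ∑ k ∈ Finset.range ((i - j - 1) / 3 + 1),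
        coeff k A * coeff (i - 5) (g * f ^ (j - 4 + 3 * k)) := by
  have hsplit : g * f ^ (j - 1) = X ^ 3 * (g * f ^ (j - 4) * psComp A f ^ 3) := by
    rw [show j - 1 = j - 4 + 3 by omega, pow_add]
    nth_rw 2 [hfA]
    ring
  rw [hsplit, show i - 2 = i - 5 + 3 by omega, coeff_X_pow_mul,
    coeff_mul_psComp_pow_prime _ _ hf]
  simp_rw [mul_assoc, ← pow_add]
  refine (Finset.sum_subset (Finset.range_subset_range.mpr (by omega)) fun k _ hk => ?_).symm
  rw [Finset.mem_range, not_lt] at hk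
  rw [coeff_mul_pow_eq_zero_of_lt g hf (by omega), mul_zero]

/-- Let `g, f, A` be power series over `ℤ/3ℤ` with `f(0) = 0`, `A(0) ≠ 0` and
`f = z·A(f)`, and write `a k = [z^k]A`.  Then for all `i > j ≥ 4`,
`[z^{i−2}] g f^{j−1} = Σ_{k=0}^{⌊(i−j−1)/3⌋} a k · [z^{i−5}] g f^{j−4+3k}`. -/
theorem riordan_decomposition_recurrence (g f A : PowerSeries (ZMod 3))
    (hf : constantCoeff f = 0)
    (hA : constantCoeff A ≠ 0)
    (hfA : f = X * psComp A f)
    (i j : ℕ) (hj : 4 ≤ j) (hij : j < i) :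
    coeff (i - 2) (g * f ^ (j - 1)) =
      ∑ k ∈ Finset.range ((i - j - 1) / 3 + 1),
        coeff k A * coeff (i - 5) (g * f ^ (j - 4 + 3 * k)) :=
  riordan_decomposition_recurrence_general g f A hf hfA i j hj hij
end

section
/- Let n = 3κ for an integer κ ≥ 1, let g, f be formal power series over ℤ/3ℤ with f(0) = 0 admitting an A-sequence (there is A over ℤ/3ℤ with A(0) ≠ 0 and f = z·A(f)), and let i ≠ j with i, j ∈ {1,2,3}. Then the induced subgraphs ⟨V_i⟩ and ⟨V_j⟩ of the oriented Riordan graph G_n^σ(g,f) are isomorphic as labeled oriented graphs, i.e. [z^{3(u−1)+i−2}] g f^{3(v−1)+i−1} = [z^{3(u−1)+j−2}] g f^{3(v−1)+j−1} for all 1 ≤ v < u ≤ κ, if and only if [z^{3m+i−2}] g f^{i−1} = [z^{3m+j−2}] g f^{j−1} for all integers m with 1 ≤ m ≤ κ−1. -/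
/-!
In characteristic `3`, `f ^ (3 * (v - 1) + i - 1) = f ^ (i - 1) * (f ^ (v - 1)) ^ 3`, and cubing
is the Frobenius, which spreads the coefficients of `f ^ (v - 1)` out by a factor `3`. Hence
every entry of `⟨V_i⟩` is a convolution of the cubed coefficients of `f ^ (v - 1)`, which do not
depend on `i`, with the first-column sequence `m ↦ [z^(3m+i-2)] g f^(i-1)`, `m ≥ 1` (the term
`m = 0` vanishes because `f ^ (i - 1)` has order `≥ i - 1`). So equal first columns give equal
subgraphs; the converse is the column `v = 1`.
-/

open PowerSeries

namespace PowerSeries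

variable {R : Type*} [CommRing R] (p : ℕ) [ExpChar R p]

theorem coeff_pow_expChar (φ : R⟦X⟧) (n : ℕ) :
    coeff n (φ ^ p) = if p ∣ n then coeff (n / p) φ ^ p else 0 := by
  have hp := expChar_ne_zero R p
  rw [← MvPowerSeries.map_frobenius_expand p hp]
  change coeff n (map (frobenius R p) (expand p hp φ)) = _
  rw [coeff_map, coeff_expand]
  split_ifs <;> simp [frobenius_def, hp]

theorem coeff_mul_pow_expChar (φ ψ : R⟦X⟧) (n : ℕ) :
    coeff n (φ * ψ ^ p) =
      ∑ m ∈ Finset.range (n / p + 1), coeff m ψ ^ p * coeff (n - p * m) φ := by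
  have hp := Nat.pos_of_ne_zero (expChar_ne_zero R p)
  rw [mul_comm, coeff_mul, Finset.Nat.sum_antidiagonal_eq_sum_range_succ_mk]
  simp only [coeff_pow_expChar, ite_mul, zero_mul]
  rw [← Finset.sum_filter]
  refine (Finset.sum_nbij' (p * ·) (· / p) ?_ ?_ ?_ ?_ ?_).symm
  · intro m hm
    simp only [Finset.mem_filter, Finset.mem_range] at hm ⊢
    have hpm := (Nat.mul_le_mul_left p (Nat.lt_succ_iff.1 hm)).trans (Nat.mul_div_le n p)
    exact ⟨Nat.lt_succ_of_le hpm, dvd_mul_right p m⟩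
  · intro k hk
    simp only [Finset.mem_filter, Finset.mem_range] at hk ⊢
    exact Nat.lt_succ_of_le (Nat.div_le_div_right (Nat.lt_succ_iff.1 hk.1))
  · intro m _
    exact Nat.mul_div_cancel_left m hp
  · intro k hk
    exact Nat.mul_div_cancel' (Finset.mem_filter.1 hk).2
  · intro m _
    simp only [Nat.mul_div_cancel_left m hp]

/-- The indices `m < K` are exactly the terms of `coeff_mul_pow_expChar` with `p * m ≤ n` that
`X ^ a ∣ φ` does not kill. -/
theorem coeff_mul_pow_expChar_eq_sum_range {φ ψ : R⟦X⟧} {a n K : ℕ} (hφ : X ^ a ∣ φ)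
    (hK : p * K ≤ n + p) (hn : n < p * K + a) :
    coeff n (φ * ψ ^ p) = ∑ m ∈ Finset.range K, coeff m ψ ^ p * coeff (n - p * m) φ := by
  have hp := Nat.pos_of_ne_zero (expChar_ne_zero R p)
  have hKn : K ≤ n / p + 1 := by
    rw [← Nat.add_div_right n hp]
    exact (Nat.le_div_iff_mul_le hp).2 (by rwa [mul_comm])
  rw [coeff_mul_pow_expChar]
  refine (Finset.sum_subset (Finset.range_subset_range.2 hKn) fun m hm hmK => ?_).symm
  simp only [Finset.mem_range, not_lt] at hm hmK
  have hpm : p * m ≤ n :=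
    (Nat.mul_le_mul_left p (Nat.lt_succ_iff.1 hm)).trans (Nat.mul_div_le n p)
  have hpK : p * K ≤ p * m := Nat.mul_le_mul_left p hmK
  rw [X_pow_dvd_iff.1 hφ _ (by omega), mul_zero]

theorem coeff_mul_pow_expChar_mul_add {g f : R⟦X⟧} (hf : constantCoeff f = 0) {i n : ℕ}
    (hi : 1 ≤ i) (hn : 1 ≤ n) (w : ℕ) :
    coeff (p * n + i - 2) (g * f ^ (p * w + i - 1)) =
      ∑ m ∈ Finset.range n,
        coeff m (f ^ w) ^ p * coeff (p * (n - m) + i - 2) (g * f ^ (i - 1)) := by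
  have hp := Nat.pos_of_ne_zero (expChar_ne_zero R p)
  have hpn : 0 < p * n := Nat.mul_pos hp hn
  rw [show p * w + i - 1 = (i - 1) + p * w by omega, pow_add, pow_mul', ← mul_assoc,
    coeff_mul_pow_expChar_eq_sum_range p (a := i - 1) (K := n)
      ((pow_dvd_pow_of_dvd (X_dvd_iff.2 hf) _).mul_left g) (by omega) (by omega)]
  refine Finset.sum_congr rfl fun m hm => ?_
  have hmn : p * m ≤ p * n := Nat.mul_le_mul_left p (Finset.mem_range.1 hm).le
  rw [Nat.mul_sub, show p * n + i - 2 - p * m = p * n - p * m + i - 2 by omega]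

end PowerSeries

theorem induced_subgraphs_isomorphic_iff_general (κ : ℕ)
    (g f : PowerSeries (ZMod 3))
    (hf : constantCoeff f = 0)
    (i j : ℕ) (hi : i = 1 ∨ i = 2 ∨ i = 3) (hj : j = 1 ∨ j = 2 ∨ j = 3) :
    (∀ u v : ℕ, 1 ≤ v → v < u → u ≤ κ →
        coeff (3 * (u - 1) + i - 2) (g * f ^ (3 * (v - 1) + i - 1)) =
          coeff (3 * (u - 1) + j - 2) (g * f ^ (3 * (v - 1) + j - 1))) ↔
    (∀ m : ℕ, 1 ≤ m → m ≤ κ - 1 →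
        coeff (3 * m + i - 2) (g * f ^ (i - 1)) =
          coeff (3 * m + j - 2) (g * f ^ (j - 1))) := by
  constructor
  · intro H m hm hmκ
    simpa using H (m + 1) 1 le_rfl (by omega) (by omega)
  · intro H u v hv hvu huκ
    rw [coeff_mul_pow_expChar_mul_add 3 hf (by omega) (by omega),
      coeff_mul_pow_expChar_mul_add 3 hf (by omega) (by omega)]
    refine Finset.sum_congr rfl fun m hm => ?_
    have hmu := Finset.mem_range.1 hm
    rw [H (u - 1 - m) (by omega) (by omega)]

/-- For `n = 3κ` and `i ≠ j` in `{1,2,3}`, the induced subgraphs `⟨V_i⟩` and `⟨V_j⟩`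
of the oriented Riordan graph `G_n^σ(g,f)` are isomorphic as labeled oriented graphs
(entrywise equality of their skew-adjacency matrices) if and only if
`[z^{3m+i−2}] g f^{i−1} = [z^{3m+j−2}] g f^{j−1}` for all `1 ≤ m ≤ κ−1`. -/
theorem induced_subgraphs_isomorphic_iff (κ : ℕ) (hκ : 1 ≤ κ)
    (g f A : PowerSeries (ZMod 3))
    (hf : constantCoeff f = 0)
    (hA : constantCoeff A ≠ 0)
    (hfA : f = X * psComp A f)
    (i j : ℕ) (hi : i = 1 ∨ i = 2 ∨ i = 3) (hj : j = 1 ∨ j = 2 ∨ j = 3) (hij : i ≠ j) :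
    (∀ u v : ℕ, 1 ≤ v → v < u → u ≤ κ →
        coeff (3 * (u - 1) + i - 2) (g * f ^ (3 * (v - 1) + i - 1)) =
          coeff (3 * (u - 1) + j - 2) (g * f ^ (3 * (v - 1) + j - 1))) ↔
    (∀ m : ℕ, 1 ≤ m → m ≤ κ - 1 →
        coeff (3 * m + i - 2) (g * f ^ (i - 1)) =
          coeff (3 * m + j - 2) (g * f ^ (j - 1))) :=
  induced_subgraphs_isomorphic_iff_general κ g f hf i j hi hj
end

section
/- Let g be a formal power series over ℤ/3ℤ with g(0) ≠ 0, and consider the proper oriented Riordan graph of Bell type G_n^σ(g, zg). Then the induced subgraph ⟨V_3⟩ is a null graph; explicitly, for all integers u > v ≥ 1 with u ≡ 0 (mod 3) and v ≡ 0 (mod 3), one has [z^{u−2}] g·(zg)^{v−1} = 0 in ℤ/3ℤ. -/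
open PowerSeries

/- In characteristic `p` the Frobenius gives `f ^ p = map (frobenius R p) (expand p f)`, so every
`p`-th power is a power series in `X ^ p`. The entry `[z^{u-2}] g (zg)^{v-1} = [z^{u-v-1}] g^v`
with `3 ∣ v` is therefore a coefficient of a power series in `z^3`, taken at an exponent
`u - v - 1 ≡ 2 (mod 3)`. -/

namespace PowerSeries

variable {R : Type*} [CommRing R] {p : ℕ} [ExpChar R p]

theorem coeff_pow_expChar_of_not_dvd (f : R⟦X⟧) {n : ℕ} (hn : ¬ p ∣ n) :
    coeff n (f ^ p) = 0 := by
  have hp : p ≠ 0 := expChar_ne_zero R p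
  have frobenius_expand : f ^ p = map (frobenius R p) (expand p hp f) :=
    (MvPowerSeries.map_frobenius_expand p hp).symm
  rw [frobenius_expand, coeff_map, coeff_expand_of_not_dvd p hp f hn, map_zero]

theorem coeff_pow_expChar_mul_of_not_dvd (f : R⟦X⟧) (k : ℕ) {n : ℕ} (hn : ¬ p ∣ n) :
    coeff n (f ^ (p * k)) = 0 := by
  rw [mul_comm, pow_mul]
  exact coeff_pow_expChar_of_not_dvd (f ^ k) hn

theorem mul_X_mul_pow_pred {S : Type*} [CommSemiring S] (g : S⟦X⟧) {v : ℕ} (hv : 1 ≤ v) :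
    g * (X * g) ^ (v - 1) = X ^ (v - 1) * g ^ v := by
  obtain ⟨w, rfl⟩ := Nat.exists_eq_add_of_le' hv
  rw [Nat.add_sub_cancel, mul_pow, pow_succ]
  ring

end PowerSeries

theorem bell_type_V3_null_general (g : PowerSeries (ZMod 3))
    (u v : ℕ) (hv : 1 ≤ v) (hu3 : u % 3 = 0) (hv3 : v % 3 = 0) :
    coeff (u - 2) (g * (X * g) ^ (v - 1)) = 0 := by
  obtain ⟨k, rfl⟩ : 3 ∣ v := Nat.dvd_of_mod_eq_zero hv3
  rw [mul_X_mul_pow_pred g hv, coeff_X_pow_mul']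
  split_ifs with hle
  · exact coeff_pow_expChar_mul_of_not_dvd g k (by omega)
  · rfl

/-- For a proper oriented Riordan graph of Bell type `G_n^σ(g, zg)` (i.e. `g(0) ≠ 0`),
the induced subgraph `⟨V_3⟩` is a null graph: for all `u > v ≥ 1` with
`u ≡ 0 (mod 3)` and `v ≡ 0 (mod 3)`, one has `[z^{u−2}] g·(zg)^{v−1} = 0`. -/
theorem bell_type_V3_null (g : PowerSeries (ZMod 3))
    (hg : constantCoeff g ≠ 0)
    (u v : ℕ) (hv : 1 ≤ v) (huv : v < u) (hu3 : u % 3 = 0) (hv3 : v % 3 = 0) :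
    coeff (u - 2) (g * (X * g) ^ (v - 1)) = 0 :=
  bell_type_V3_null_general g u v hv hu3 hv3
end

section
/- Let g be a formal power series over ℤ/3ℤ with g(0) ≠ 0. Then the oriented Riordan graph of Bell type G_n^σ(g, zg) is i1-decomposable — that is, (C1) [z^{3u−4}] g·(zg)^{3(v−1)} = [z^{u−2}] g·(zg)^{v−1} for all integers u > v ≥ 1 (⟨V_1⟩ is isomorphic to G^σ(g,zg)), (C2) [z^{3u−3}] g·(zg)^{3v−2} = 0 for all integers u > v ≥ 1 (⟨V_2⟩ is null), and (C3) [z^{3u−2}] g·(zg)^{3v−1} = 0 for all integers u > v ≥ 1 (⟨V_3⟩ is null) — if and only if g′ = g² or g′ = −g², where g′ denotes the formal derivative of g. -/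
/-!
Over `ZMod 3` every series splits as `g = A³ + X B³ + X² C³` into its 3-sections
`A, B, C` (`multisection 3 i g`), and cubes behave like scalars under taking sections:
the `2`-section of `f h³` is (the `2`-section of `f`) `* h`. Hence the three families of
conditions say exactly that `C = g` and that the `2`-section `B² + 2AC` of `g²` vanishes.
Then `g' = B³ - X g³` and `B² = A g` give `g'² = g⁴`. Conversely, `g' = ±g²` gives
`g'' = 2 g³`, while `g'' = 2 C³`, so `C = g`; and the `2`-section of any derivative vanishes,
in particular that of `g² = ±g'`.
-/

open PowerSeries

namespace PowerSeries

section Multisection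

variable {R : Type*}

noncomputable def multisection [Semiring R] (p i : ℕ) : R⟦X⟧ →ₗ[R] R⟦X⟧ where
  toFun f := mk fun n => coeff (p * n + i) f
  map_add' f g := by ext; simp
  map_smul' r f := by ext; simp

@[simp]
theorem coeff_multisection [Semiring R] (p i n : ℕ) (f : R⟦X⟧) :
    coeff n (multisection p i f) = coeff (p * n + i) f := by
  simp [multisection]

theorem multisection_succ_X_mul [Semiring R] (p i : ℕ) (f : R⟦X⟧) :
    multisection p (i + 1) (X * f) = multisection p i f := by
  ext n
  rw [coeff_multisection, coeff_multisection, ← add_assoc, coeff_succ_X_mul]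

variable [CommRing R] {p : ℕ} (hp : p ≠ 0)

theorem coeff_X_pow_mul_expand {i j : ℕ} (hi : i < p) (hj : j < p) (t : ℕ) (f : R⟦X⟧) :
    coeff (p * t + i) (X ^ j * expand p hp f) = if j = i then coeff t f else 0 := by
  rw [coeff_X_pow_mul', coeff_expand]
  by_cases hji : j = i
  · subst hji
    simp [Nat.mul_div_cancel_left t (Nat.pos_of_ne_zero hp)]
  · rw [if_neg hji]
    split_ifs with hle hdvd <;> try rfl
    obtain ⟨k, hk⟩ := hdvd
    have hmod := congrArg (· % p) (show p * t + i = p * k + j by omega)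
    simp only [Nat.mul_add_mod, Nat.mod_eq_of_lt hi, Nat.mod_eq_of_lt hj] at hmod
    exact absurd hmod.symm hji

theorem sum_X_pow_mul_expand_multisection (f : R⟦X⟧) :
    ∑ j ∈ Finset.range p, X ^ j * expand p hp (multisection p j f) = f := by
  ext n
  obtain ⟨t, i, hi, rfl⟩ : ∃ t i, i < p ∧ n = p * t + i :=
    ⟨n / p, n % p, Nat.mod_lt n (Nat.pos_of_ne_zero hp), (Nat.div_add_mod n p).symm⟩
  rw [map_sum, Finset.sum_congr rfl fun j hj =>
    coeff_X_pow_mul_expand hp hi (Finset.mem_range.mp hj) t _, Finset.sum_ite_eq',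
    if_pos (Finset.mem_range.mpr hi), coeff_multisection]

theorem multisection_mul_expand {i : ℕ} (hi : i < p) (f h : R⟦X⟧) :
    multisection p i (f * expand p hp h) = multisection p i f * h := by
  ext t
  conv_lhs => rw [← sum_X_pow_mul_expand_multisection hp f]
  simp_rw [coeff_multisection, Finset.sum_mul, map_sum, mul_assoc, ← map_mul]
  rw [Finset.sum_congr rfl fun j hj =>
    coeff_X_pow_mul_expand hp hi (Finset.mem_range.mp hj) t _, Finset.sum_ite_eq',
    if_pos (Finset.mem_range.mpr hi)]

theorem map_frobenius_expand [ExpChar R p] (f : R⟦X⟧) :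
    map (frobenius R p) (expand p hp f) = f ^ p :=
  MvPowerSeries.map_frobenius_expand p hp

end Multisection

section ZMod

variable {p : ℕ} [hp : Fact p.Prime]

theorem expand_eq_pow_char_zmod (f : (ZMod p)⟦X⟧) : expand p hp.out.ne_zero f = f ^ p := by
  rw [← map_frobenius_expand, ZMod.frobenius_zmod, map_id, id]

variable (p) in
theorem natCast_char_zmod : (p : (ZMod p)⟦X⟧) = 0 := by
  rw [← map_natCast C, ZMod.natCast_self, map_zero]

theorem pow_char_injective_zmod : Function.Injective fun f : (ZMod p)⟦X⟧ => f ^ p := by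
  intro f h hfh
  ext n
  simpa only [← expand_eq_pow_char_zmod, coeff_expand_mul] using congrArg (coeff (p * n)) hfh

theorem multisection_mul_pow_char_zmod {i : ℕ} (hi : i < p) (f h : (ZMod p)⟦X⟧) :
    multisection p i (f * h ^ p) = multisection p i f * h := by
  rw [← expand_eq_pow_char_zmod, multisection_mul_expand _ hi]

theorem derivative_pow_char_zmod (f : (ZMod p)⟦X⟧) : d⁄dX (ZMod p) (f ^ p) = 0 := by
  rw [derivative_pow, natCast_char_zmod p, zero_mul, zero_mul]

theorem multisection_pred_derivative_zmod (f : (ZMod p)⟦X⟧) :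
    multisection p (p - 1) (d⁄dX (ZMod p) f) = 0 := by
  ext n
  have hcast : ((p * n + (p - 1) : ℕ) : ZMod p) + 1 = 0 := by
    rw [← Nat.cast_succ, ZMod.natCast_eq_zero_iff]
    exact ⟨n + 1, by have := hp.out.pos; rw [Nat.mul_succ]; omega⟩
  rw [coeff_multisection, coeff_derivative, hcast, mul_zero, map_zero]

theorem derivative_mul_pow_char_zmod (f h : (ZMod p)⟦X⟧) :
    d⁄dX (ZMod p) (f * h ^ p) = d⁄dX (ZMod p) f * h ^ p := by
  rw [Derivation.leibniz, derivative_pow_char_zmod, smul_zero, zero_add, smul_eq_mul, mul_comm]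

end ZMod

section CharThree

variable (g : (ZMod 3)⟦X⟧)

theorem eq_cube_add_X_mul_cube_add_X_sq_mul_cube :
    g = multisection 3 0 g ^ 3 + X * multisection 3 1 g ^ 3 + X ^ 2 * multisection 3 2 g ^ 3 := by
  conv_lhs => rw [← sum_X_pow_mul_expand_multisection three_ne_zero g]
  simp only [Finset.sum_range_succ, Finset.sum_range_zero, expand_eq_pow_char_zmod, zero_add,
    pow_zero, one_mul, pow_one]

theorem derivative_eq_cube_add_two_X_mul_cube :
    d⁄dX (ZMod 3) g = multisection 3 1 g ^ 3 + 2 * X * multisection 3 2 g ^ 3 := by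
  conv_lhs => rw [eq_cube_add_X_mul_cube_add_X_sq_mul_cube g]
  rw [map_add, map_add, derivative_pow_char_zmod, derivative_mul_pow_char_zmod,
    derivative_mul_pow_char_zmod, derivative_X, derivative_pow, derivative_X]
  norm_num

theorem derivative_derivative_eq_two_mul_cube :
    d⁄dX (ZMod 3) (d⁄dX (ZMod 3) g) = 2 * multisection 3 2 g ^ 3 := by
  rw [derivative_eq_cube_add_two_X_mul_cube g, two_mul, add_mul, map_add, map_add,
    derivative_pow_char_zmod, derivative_mul_pow_char_zmod, derivative_X]
  ring

theorem multisection_two_sq :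
    multisection 3 2 (g ^ 2) =
      multisection 3 1 g ^ 2 + 2 * multisection 3 0 g * multisection 3 2 g := by
  have hsq : g ^ 2 = g * multisection 3 0 g ^ 3 + X * (g * multisection 3 1 g ^ 3) +
      X * (X * (g * multisection 3 2 g ^ 3)) := by
    conv_lhs => rw [sq]; enter [2]; rw [eq_cube_add_X_mul_cube_add_X_sq_mul_cube g]
    ring
  rw [hsq, map_add, map_add, multisection_succ_X_mul, multisection_succ_X_mul,
    multisection_succ_X_mul]
  simp only [multisection_mul_pow_char_zmod (show 2 < 3 by norm_num),
    multisection_mul_pow_char_zmod (show 1 < 3 by norm_num),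
    multisection_mul_pow_char_zmod (show 0 < 3 by norm_num)]
  ring

theorem derivative_eq_sq_or_neg_sq_of_multisection (hg : multisection 3 2 g = g)
    (hsq : multisection 3 2 (g ^ 2) = 0) :
    d⁄dX (ZMod 3) g = g ^ 2 ∨ d⁄dX (ZMod 3) g = -g ^ 2 := by
  set A := multisection 3 0 g
  set B := multisection 3 1 g
  have hdecomp : g = A ^ 3 + X * B ^ 3 + X ^ 2 * g ^ 3 := by
    conv_lhs => rw [eq_cube_add_X_mul_cube_add_X_sq_mul_cube g, hg]
  have hB : B ^ 2 = A * g := by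
    have h := multisection_two_sq g
    rw [hsq, hg] at h
    linear_combination -h - A * g * natCast_char_zmod 3
  have hderiv : d⁄dX (ZMod 3) g = B ^ 3 - X * g ^ 3 := by
    rw [derivative_eq_cube_add_two_X_mul_cube, hg]
    linear_combination X * g ^ 3 * natCast_char_zmod 3
  rw [← sq_eq_sq_iff_eq_or_eq_neg, hderiv]
  -- `g ^ 4 = g ^ 3 * g`, expanded by `hdecomp`, differs from the left side by `3 X B³ g³`.
  linear_combination
    congrArg (· ^ 3) hB - g ^ 3 * hdecomp - X * B ^ 3 * g ^ 3 * natCast_char_zmod 3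

theorem multisection_of_derivative_eq_sq_or_neg_sq
    (h : d⁄dX (ZMod 3) g = g ^ 2 ∨ d⁄dX (ZMod 3) g = -g ^ 2) :
    multisection 3 2 g = g ∧ multisection 3 2 (g ^ 2) = 0 := by
  have hdd : d⁄dX (ZMod 3) (d⁄dX (ZMod 3) g) = 2 * g ^ 3 := by
    rcases h with h | h
    · rw [h, derivative_pow, h]; ring
    · rw [h, map_neg, derivative_pow, h]; ring
  have hpred : multisection 3 2 (d⁄dX (ZMod 3) g) = 0 :=
    multisection_pred_derivative_zmod (p := 3) g
  constructor
  · apply pow_char_injective_zmod (p := 3)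
    have h2 := (derivative_derivative_eq_two_mul_cube g).symm.trans hdd
    linear_combination 2 * h2 + (g ^ 3 - multisection 3 2 g ^ 3) * natCast_char_zmod 3
  · rcases h with h | h
    · rwa [← h]
    · rw [← neg_neg (g ^ 2), ← h, map_neg, hpred, neg_zero]

end CharThree

end PowerSeries

theorem Nat.forall_one_le_of_lt_iff {P : ℕ → ℕ → Prop} :
    (∀ u v : ℕ, 1 ≤ v → v < u → P u v) ↔ ∀ t m : ℕ, P (t + m + 2) (m + 1) := by
  refine ⟨fun h t m => h _ _ (by omega) (by omega), fun h u v hv hvu => ?_⟩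
  obtain ⟨m, rfl⟩ : ∃ m, v = m + 1 := ⟨v - 1, by omega⟩
  obtain ⟨t, rfl⟩ : ∃ t, u = t + m + 2 := ⟨u - m - 2, by omega⟩
  exact h t m

def IsI1Decomposable (g : (ZMod 3)⟦X⟧) : Prop :=
  (∀ u v : ℕ, 1 ≤ v → v < u →
      coeff (3 * u - 4) (g * (X * g) ^ (3 * (v - 1))) =
        coeff (u - 2) (g * (X * g) ^ (v - 1))) ∧
    (∀ u v : ℕ, 1 ≤ v → v < u →
      coeff (3 * u - 3) (g * (X * g) ^ (3 * v - 2)) = 0) ∧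
    (∀ u v : ℕ, 1 ≤ v → v < u →
      coeff (3 * u - 2) (g * (X * g) ^ (3 * v - 1)) = 0)

theorem isI1Decomposable_of_multisection {g : (ZMod 3)⟦X⟧} (hg : multisection 3 2 g = g)
    (hsq : multisection 3 2 (g ^ 2) = 0) : IsI1Decomposable g := by
  simp only [IsI1Decomposable, Nat.forall_one_le_of_lt_iff]
  refine ⟨fun t m => ?_, fun t m => ?_, fun t m => ?_⟩
  · rw [show 3 * (t + m + 2) - 4 = 3 * t + 2 + 3 * m by omega,
      show t + m + 2 - 2 = t + m by omega, Nat.add_sub_cancel,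
      show g * (X * g) ^ (3 * m) = X ^ (3 * m) * (g * (g ^ m) ^ 3) by ring,
      show g * (X * g) ^ m = X ^ m * (g * g ^ m) by ring,
      coeff_X_pow_mul, coeff_X_pow_mul, ← coeff_multisection,
      multisection_mul_pow_char_zmod (by norm_num), hg]
  · rw [show 3 * (t + m + 2) - 3 = 3 * t + 2 + (3 * m + 1) by omega,
      show 3 * (m + 1) - 2 = 3 * m + 1 by omega,
      show g * (X * g) ^ (3 * m + 1) = X ^ (3 * m + 1) * (g ^ 2 * (g ^ m) ^ 3) by ring,
      coeff_X_pow_mul, ← coeff_multisection, multisection_mul_pow_char_zmod (by norm_num), hsq,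
      zero_mul, map_zero]
  · rw [show 3 * (t + m + 2) - 2 = 3 * t + 2 + (3 * m + 2) by omega,
      show 3 * (m + 1) - 1 = 3 * m + 2 by omega,
      show g * (X * g) ^ (3 * m + 2) = X ^ (3 * m + 2) * (g ^ (m + 1)) ^ 3 by ring,
      coeff_X_pow_mul, ← expand_eq_pow_char_zmod, coeff_expand_of_not_dvd _ _ _ (by omega)]

theorem multisection_of_isI1Decomposable {g : (ZMod 3)⟦X⟧} (h : IsI1Decomposable g) :
    multisection 3 2 g = g ∧ multisection 3 2 (g ^ 2) = 0 := by
  simp only [IsI1Decomposable, Nat.forall_one_le_of_lt_iff] at h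
  obtain ⟨h1, h2, -⟩ := h
  constructor <;> ext n
  · simpa [show 3 * (n + 0 + 2) - 4 = 3 * n + 2 by omega] using h1 n 0
  · have := h2 n 0
    rw [show 3 * (n + 0 + 2) - 3 = 3 * n + 2 + 1 by omega, zero_add, mul_one,
      show 3 - 2 = 1 by rfl, pow_one, mul_left_comm, coeff_succ_X_mul, ← sq] at this
    simpa using this

theorem isI1Decomposable_iff_multisection (g : (ZMod 3)⟦X⟧) :
    IsI1Decomposable g ↔ multisection 3 2 g = g ∧ multisection 3 2 (g ^ 2) = 0 :=
  ⟨multisection_of_isI1Decomposable, fun h => isI1Decomposable_of_multisection h.1 h.2⟩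

theorem bell_type_i1_decomposable_iff_general (g : PowerSeries (ZMod 3)) :
    ((∀ u v : ℕ, 1 ≤ v → v < u →
        coeff (3 * u - 4) (g * (X * g) ^ (3 * (v - 1))) =
          coeff (u - 2) (g * (X * g) ^ (v - 1))) ∧
     (∀ u v : ℕ, 1 ≤ v → v < u →
        coeff (3 * u - 3) (g * (X * g) ^ (3 * v - 2)) = 0) ∧
     (∀ u v : ℕ, 1 ≤ v → v < u →
        coeff (3 * u - 2) (g * (X * g) ^ (3 * v - 1)) = 0)) ↔
    (d⁄dX (ZMod 3) g = g ^ 2 ∨ d⁄dX (ZMod 3) g = -g ^ 2) :=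
  (isI1Decomposable_iff_multisection g).trans
    ⟨fun h => derivative_eq_sq_or_neg_sq_of_multisection g h.1 h.2,
      multisection_of_derivative_eq_sq_or_neg_sq g⟩

/-- The oriented Riordan graph of Bell type `G_n^σ(g, zg)` (with `g(0) ≠ 0`) is
i1-decomposable — i.e. (C1) `⟨V_1⟩ ≅ G^σ(g,zg)`:
`[z^{3u−4}] g(zg)^{3(v−1)} = [z^{u−2}] g(zg)^{v−1}` for all `u > v ≥ 1`;
(C2) `⟨V_2⟩` is null: `[z^{3u−3}] g(zg)^{3v−2} = 0` for all `u > v ≥ 1`; and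
(C3) `⟨V_3⟩` is null: `[z^{3u−2}] g(zg)^{3v−1} = 0` for all `u > v ≥ 1` —
if and only if `g′ = g²` or `g′ = −g²`. -/
theorem bell_type_i1_decomposable_iff (g : PowerSeries (ZMod 3))
    (hg : constantCoeff g ≠ 0) :
    ((∀ u v : ℕ, 1 ≤ v → v < u →
        coeff (3 * u - 4) (g * (X * g) ^ (3 * (v - 1))) =
          coeff (u - 2) (g * (X * g) ^ (v - 1))) ∧
     (∀ u v : ℕ, 1 ≤ v → v < u →
        coeff (3 * u - 3) (g * (X * g) ^ (3 * v - 2)) = 0) ∧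
     (∀ u v : ℕ, 1 ≤ v → v < u →
        coeff (3 * u - 2) (g * (X * g) ^ (3 * v - 1)) = 0)) ↔
    (d⁄dX (ZMod 3) g = g ^ 2 ∨ d⁄dX (ZMod 3) g = -g ^ 2) :=
  bell_type_i1_decomposable_iff_general g
end

section
/- Let g be a formal power series over ℤ/3ℤ, and let A be a power series over ℤ/3ℤ with [z^0]A = 1 such that g = A(zg) (so A generates the ternary A-sequence (a_0, a_1, a_2, …) of the Riordan array (g, zg), a_k = [z^k]A). Then the oriented Riordan graph G_n^σ(g,zg) is i1-decomposable (equivalently, g′ = g² or g′ = −g²) if and only if either a_{3k+1} = a_{3k} and a_{3k+2} = 0 for all k ≥ 0 (A-sequence of the form (1,1,0,a₃,a₃,0,a₆,a₆,0,…)), or a_{3k+1} = −a_{3k} and a_{3k+2} = 0 for all k ≥ 0 (A-sequence of the form (1,−1,0,a₃,−a₃,0,a₆,−a₆,0,…)). -/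
/-! With `w = z g`, the chain rule applied to `g = A(w)` gives `g' = A'(w) (g + z g')`, and hence
the identity `(g' - ε g²) (1 - z A'(w)) = g · E(w)` for `E = (1 + ε z) A' - ε A`. Both `g` and
`1 - z A'(w)` have nonzero constant term, and substituting `w = z · (unit)` is injective, so
`g' = ε g²` iff `E = 0`. In coefficients, `E = 0` reads `(n + 1) a_{n+1} = ε (1 - n) a_n`,
which modulo 3 is exactly `a_{3k+1} = ε a_{3k}` and `a_{3k+2} = 0`. -/

open PowerSeries

namespace PowerSeries

variable {R : Type*} [CommRing R]

theorem coeff_pow_eq_zero_of_lt {f : R⟦X⟧} (hf : constantCoeff f = 0) {n k : ℕ} (h : n < k) :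
    coeff n (f ^ k) = 0 :=
  X_pow_dvd_iff.mp (pow_dvd_pow_of_dvd (X_dvd_iff.mpr hf) k) n h

theorem coeff_X_mul_pow_self (g : R⟦X⟧) (n : ℕ) :
    coeff n ((X * g) ^ n) = constantCoeff g ^ n := by
  rw [mul_pow, coeff_X_pow_mul', if_pos le_rfl, Nat.sub_self, coeff_zero_eq_constantCoeff,
    map_pow]

theorem coeff_X_mul_derivative (f : R⟦X⟧) (n : ℕ) :
    coeff n (X * d⁄dX R f) = n * coeff n f := by
  cases n with
  | zero => simp
  | succ m => rw [coeff_succ_X_mul, coeff_derivative, mul_comm]; push_cast; ring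

theorem coeff_psComp (A f : R⟦X⟧) (n : ℕ) :
    coeff n (psComp A f) = ∑ k ∈ Finset.range (n + 1), coeff k A * coeff n (f ^ k) :=
  coeff_mk _ _

theorem psComp_eq_subst (A : R⟦X⟧) {f : R⟦X⟧} (hf : constantCoeff f = 0) :
    psComp A f = A.subst f := by
  ext n
  rw [coeff_psComp, coeff_subst' (HasSubst.of_constantCoeff_zero' hf)]
  refine (finsum_eq_sum_of_support_subset _ fun k hk => ?_).symm
  by_contra hkn
  simp only [Finset.coe_range, Set.mem_Iio, not_lt] at hkn
  exact hk (by dsimp only; rw [coeff_pow_eq_zero_of_lt hf (by omega), mul_zero])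

theorem eq_zero_of_psComp_X_mul_eq_zero [NoZeroDivisors R] {g E : R⟦X⟧}
    (hg : constantCoeff g ≠ 0) (h : psComp E (X * g) = 0) : E = 0 := by
  ext n
  induction n using Nat.strong_induction_on with
  | _ n ih =>
    have hn := congrArg (coeff n) h
    rw [coeff_psComp, Finset.sum_range_succ, coeff_X_mul_pow_self, map_zero,
      Finset.sum_eq_zero fun k hk => by rw [ih k (Finset.mem_range.mp hk), map_zero, zero_mul],
      zero_add] at hn
    simpa [pow_ne_zero n hg] using hn

theorem derivative_eq_C_mul_sq_iff [IsDomain R] {g A : R⟦X⟧} (hA0 : coeff 0 A ≠ 0)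
    (hgA : g = psComp A (X * g)) (ε : R) :
    d⁄dX R g = C ε * g ^ 2 ↔ (1 + C ε * X) * d⁄dX R A = C ε * A := by
  have hw : constantCoeff (X * g) = 0 := by simp
  have hg0 : constantCoeff g ≠ 0 := by
    rwa [← coeff_zero_eq_constantCoeff_apply, hgA, coeff_psComp, Finset.sum_range_one,
      pow_zero, coeff_one, if_pos rfl, mul_one]
  rw [psComp_eq_subst A hw] at hgA
  set a : R⟦X⟧ := (d⁄dX R A).subst (X * g)
  have hchain : d⁄dX R g = a * (g + X * d⁄dX R g) := by
    conv_lhs => rw [hgA]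
    rw [derivative_subst (HasSubst.of_constantCoeff_zero' hw)]
    simp only [Derivation.leibniz, derivative_X, smul_eq_mul, mul_one]
    rw [add_comm]
  set E := (1 + C ε * X) * d⁄dX R A - C ε * A
  have hE : psComp E (X * g) = (1 + C ε * (X * g)) * a - C ε * g := by
    rw [psComp_eq_subst _ hw]
    rw [← coe_substAlgHom (HasSubst.of_constantCoeff_zero' hw)] at hgA ⊢
    rw [map_sub, map_mul, map_add, map_one, map_mul, map_mul, substAlgHom_X, ← hgA,
      coe_substAlgHom, subst_C]
    rfl
  have key : (d⁄dX R g - C ε * g ^ 2) * (1 - X * a) = g * psComp E (X * g) := by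
    rw [hE]
    linear_combination hchain
  have hg : g ≠ 0 := fun h => hg0 (by rw [h, map_zero])
  have hXa : 1 - X * a ≠ 0 := fun h =>
    one_ne_zero (α := R) (by simpa using congrArg constantCoeff h)
  calc d⁄dX R g = C ε * g ^ 2 ↔ (d⁄dX R g - C ε * g ^ 2) * (1 - X * a) = 0 := by
        rw [mul_eq_zero, sub_eq_zero, or_iff_left hXa]
    _ ↔ psComp E (X * g) = 0 := by rw [key, mul_eq_zero, or_iff_right hg]
    _ ↔ E = 0 :=
        ⟨eq_zero_of_psComp_X_mul_eq_zero hg0, fun h => by ext n; simp [h, coeff_psComp]⟩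
    _ ↔ _ := sub_eq_zero

theorem one_add_C_mul_X_mul_derivative_eq_C_mul_iff [CharP R 3] (A : R⟦X⟧) (ε : R) :
    (1 + C ε * X) * d⁄dX R A = C ε * A ↔
      ∀ k : ℕ, coeff (3 * k + 1) A = ε * coeff (3 * k) A ∧ coeff (3 * k + 2) A = 0 := by
  have hcoeff (n : ℕ) : coeff n ((1 + C ε * X) * d⁄dX R A)
      = (n + 1) * coeff (n + 1) A + ε * n * coeff n A := by
    rw [add_mul, one_mul, map_add, coeff_derivative, mul_assoc, coeff_C_mul,
      coeff_X_mul_derivative]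
    ring
  have h3 : (3 : R) = 0 := by exact_mod_cast CharP.cast_eq_zero R 3
  simp only [PowerSeries.ext_iff, hcoeff, coeff_C_mul]
  constructor
  · intro h k
    have e0 := h (3 * k)
    have e1 := h (3 * k + 1)
    push_cast at e0 e1
    constructor
    · linear_combination e0 - (k * coeff (3 * k + 1) A + ε * k * coeff (3 * k) A) * h3
    · linear_combination -e1 + ((k + 1) * coeff (3 * k + 2) A + ε * k * coeff (3 * k + 1) A) * h3
  · intro h n
    obtain ⟨k, rfl | rfl | rfl⟩ : ∃ k, n = 3 * k ∨ n = 3 * k + 1 ∨ n = 3 * k + 2 :=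
      ⟨n / 3, by omega⟩
    · push_cast
      linear_combination (h k).1 + (k * coeff (3 * k + 1) A + ε * k * coeff (3 * k) A) * h3
    · push_cast
      linear_combination (3 * k + 2 : R) * (h k).2 + ε * k * coeff (3 * k + 1) A * h3
    · push_cast
      linear_combination (k + 1) * coeff (3 * k + 3) A * h3 + ε * (3 * k + 1 : R) * (h k).2

end PowerSeries

/-- Let `g` be a power series over `ℤ/3ℤ` and `A` its ternary `A`-sequence
generating function for the Bell-type Riordan array `(g, zg)`, i.e. `[z^0]A = 1` and
`g = A(zg)`.  Then `G_n^σ(g,zg)` is i1-decomposable (equivalently `g′ = g²` or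
`g′ = −g²`) if and only if either `a_{3k+1} = a_{3k}` and `a_{3k+2} = 0` for all
`k ≥ 0`, or `a_{3k+1} = −a_{3k}` and `a_{3k+2} = 0` for all `k ≥ 0`. -/
theorem i1_decomposable_iff_A_sequence (g A : PowerSeries (ZMod 3))
    (hA0 : coeff 0 A = 1)
    (hgA : g = psComp A (X * g)) :
    (d⁄dX (ZMod 3) g = g ^ 2 ∨ d⁄dX (ZMod 3) g = -g ^ 2) ↔
    ((∀ k : ℕ, coeff (3 * k + 1) A = coeff (3 * k) A ∧
        coeff (3 * k + 2) A = 0) ∨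
     (∀ k : ℕ, coeff (3 * k + 1) A = -coeff (3 * k) A ∧
        coeff (3 * k + 2) A = 0)) := by
  have key (ε : ZMod 3) :=
    (derivative_eq_C_mul_sq_iff (by rw [hA0]; exact one_ne_zero) hgA ε).trans
      (one_add_C_mul_X_mul_derivative_eq_C_mul_iff A ε)
  exact or_congr (by simpa using key 1) (by simpa using key (-1))
end

section
/- Let g be a formal power series over ℤ/3ℤ with [z^0]g = 1 and g′ = g² (formal derivative). Then for every integer i ≥ 1 and every integer k with 1 ≤ k ≤ 3^i, one has [z^{3^i − k}] g^k = (−1)^{k+1} in ℤ/3ℤ. Equivalently, for n = 3^i + 1 the n-th row of the skew-adjacency matrix of the i1-decomposable Bell-type oriented Riordan graph G_n^σ(g, zg) is (1, −1, 1, −1, …, 1, −1, 1, 0). -/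
/-!
Differentiating `g ^ k` using `g' = g²` gives `k [z^n] g^(k+1) = (n + 1) [z^(n+1)] g^k`. Put
`a_k = [z^(N-k)] g^k` with `p ∣ N`; taking `n + 1 = N - k ≡ -k (mod p)` turns this into
`a_(k+1) = -a_k` whenever `p ∤ k`, so `a` alternates in sign up to each multiple of `p`. At the
multiples of `p`, Frobenius gives `a_(pt) = [z^(N/p - t)] g^t`, which for `N = p^(i+1)` is the
same quantity one level down; induction on `i` finishes, the case `i = 0` being `[z^0] g = 1`.
-/

open PowerSeries

theorem PowerSeries.coeff_mul_pow_expChar_s16 {R : Type*} [CommRing R] (p : ℕ) [ExpChar R p]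
    (f : R⟦X⟧) (n : ℕ) : coeff (p * n) (f ^ p) = coeff n f ^ p := by
  have hp : p ≠ 0 := expChar_ne_zero R p
  rw [← MvPowerSeries.map_frobenius_expand p hp]
  change coeff (p * n) (map (frobenius R p) (expand p hp f)) = _
  rw [coeff_map, coeff_expand_mul, frobenius_def]

theorem neg_one_pow_mul_sub_add_one (R : Type*) [Ring R] (p : ℕ) [Fact p.Prime] [CharP R p]
    {t m : ℕ} (h : m ≤ p * t) : (-1 : R) ^ (p * t - m + 1) = (-1) ^ m * (-1) ^ (t + 1) := by
  obtain ⟨k, hk⟩ : ∃ k, p * t = k + m := ⟨p * t - m, by omega⟩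
  have hpt : (-1 : R) ^ t = (-1) ^ (p * t) := by rw [pow_mul, neg_one_pow_char R p]
  rw [pow_succ, pow_succ, hpt, hk, Nat.add_sub_cancel, pow_add]
  rcases neg_one_pow_eq_or R m with hm | hm <;> simp [hm]

theorem Nat.exists_eq_mul_sub_of_le_mul {p k M : ℕ} (hp : 0 < p) (hk1 : 1 ≤ k)
    (hk : k ≤ p * M) : ∃ t m, k = p * t - m ∧ 1 ≤ t ∧ t ≤ M ∧ m < p := by
  have hdiv := Nat.div_add_mod (k - 1) p
  have hmod := Nat.mod_lt (k - 1) hp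
  have hq : (k - 1) / p < M := (Nat.div_lt_iff_lt_mul hp).2 (by rw [mul_comm]; omega)
  refine ⟨(k - 1) / p + 1, p - 1 - (k - 1) % p, ?_, Nat.le_add_left 1 _, hq, by omega⟩
  rw [Nat.mul_succ]
  generalize p * ((k - 1) / p) = P at hdiv
  omega

section Riccati

variable {R : Type*} [CommSemiring R] {g : R⟦X⟧}

theorem derivative_pow_of_derivative_eq_sq (hg : d⁄dX R g = g ^ 2) (k : ℕ) :
    d⁄dX R (g ^ k) = k * g ^ (k + 1) := by
  rw [derivative_pow, hg, mul_assoc, ← pow_add]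
  rcases k with _ | k
  · simp
  · rw [Nat.add_sub_cancel]

theorem natCast_mul_coeff_pow_succ (hg : d⁄dX R g = g ^ 2) (k n : ℕ) :
    k * coeff n (g ^ (k + 1)) = coeff (n + 1) (g ^ k) * (n + 1) := by
  rw [← coeff_derivative, derivative_pow_of_derivative_eq_sq hg, ← map_natCast (C (R := R)),
    coeff_C_mul]

end Riccati

section ZModP

variable {p : ℕ} [Fact p.Prime] {g : (ZMod p)⟦X⟧}

theorem coeff_sub_succ_pow_succ_eq_neg (hg : d⁄dX (ZMod p) g = g ^ 2) {N k : ℕ} (hN : p ∣ N)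
    (hk : ¬ p ∣ k) (hkN : k < N) :
    coeff (N - (k + 1)) (g ^ (k + 1)) = -coeff (N - k) (g ^ k) := by
  have hrel := natCast_mul_coeff_pow_succ hg k (N - (k + 1))
  have hNk : N - (k + 1) + 1 = N - k := by omega
  have hcast : ((N - (k + 1) : ℕ) : ZMod p) + 1 = -k := by
    rw [← Nat.cast_add_one, hNk, Nat.cast_sub hkN.le, (ZMod.natCast_eq_zero_iff N p).mpr hN,
      zero_sub]
  have hk0 : (k : ZMod p) ≠ 0 := mt (ZMod.natCast_eq_zero_iff k p).mp hk
  rw [hNk, hcast] at hrel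
  exact mul_left_cancel₀ hk0 (by rw [hrel]; ring)

theorem coeff_sub_pow_mul_sub_eq_neg_one_pow_mul (hg : d⁄dX (ZMod p) g = g ^ 2) {N t m : ℕ}
    (hN : p ∣ N) (ht : 0 < t) (htN : p * t ≤ N) (hm : m < p) :
    coeff (N - (p * t - m)) (g ^ (p * t - m)) = (-1) ^ m * coeff (N - p * t) (g ^ (p * t)) := by
  induction m with
  | zero => simp
  | succ m ih =>
    have hmt : m + 1 ≤ p * t := le_trans hm.le (Nat.le_mul_of_pos_right p ht)
    have hk : ¬ p ∣ p * t - (m + 1) := fun h =>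
      hm.not_ge (Nat.le_of_dvd m.succ_pos (by
        simpa [Nat.sub_sub_self hmt] using Nat.dvd_sub (dvd_mul_right p t) h))
    have hstep := coeff_sub_succ_pow_succ_eq_neg hg hN hk (by omega)
    rw [show p * t - (m + 1) + 1 = p * t - m by omega, ih (by omega)] at hstep
    linear_combination hstep

theorem coeff_prime_pow_sub_pow_eq_neg_one_pow (hg0 : coeff 0 g = 1)
    (hg : d⁄dX (ZMod p) g = g ^ 2) (i : ℕ) {k : ℕ} (hk1 : 1 ≤ k) (hk : k ≤ p ^ i) :
    coeff (p ^ i - k) (g ^ k) = (-1) ^ (k + 1) := by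
  induction i generalizing k with
  | zero =>
    obtain rfl : k = 1 := le_antisymm (by simpa using hk) hk1
    simpa using hg0
  | succ i ih =>
    obtain ⟨t, m, rfl, ht1, ht, hm⟩ :=
      Nat.exists_eq_mul_sub_of_le_mul (Fact.out : p.Prime).pos hk1 (pow_succ' p i ▸ hk)
    have hfrob : coeff (p ^ (i + 1) - p * t) (g ^ (p * t)) = coeff (p ^ i - t) (g ^ t) := by
      rw [pow_succ', ← Nat.mul_sub, mul_comm p t, pow_mul, coeff_mul_pow_expChar_s16, ZMod.pow_card]
    rw [coeff_sub_pow_mul_sub_eq_neg_one_pow_mul hg (dvd_pow_self p i.succ_ne_zero) ht1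
      (by rw [pow_succ']; exact Nat.mul_le_mul_left p ht) hm, hfrob, ih ht1 ht,
      neg_one_pow_mul_sub_add_one _ p (hm.le.trans (Nat.le_mul_of_pos_right p ht1))]

end ZModP

theorem bell_row_three_pow_add_one_general (g : PowerSeries (ZMod 3))
    (hg0 : coeff 0 g = 1)
    (hg : d⁄dX (ZMod 3) g = g ^ 2)
    (i : ℕ) (k : ℕ) (hk1 : 1 ≤ k) (hk : k ≤ 3 ^ i) :
    coeff (3 ^ i - k) (g ^ k) = (-1) ^ (k + 1) :=
  coeff_prime_pow_sub_pow_eq_neg_one_pow hg0 hg i hk1 hk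

/-- Let `g` be a power series over `ℤ/3ℤ` with `[z^0]g = 1` and `g′ = g²`.  Then for
every `i ≥ 1` and `1 ≤ k ≤ 3^i`, `[z^{3^i − k}] g^k = (−1)^{k+1}`; i.e. for
`n = 3^i + 1` the `n`-th row of the skew-adjacency matrix of the i1-decomposable
Bell-type oriented Riordan graph `G_n^σ(g, zg)` is `(1, −1, 1, −1, …, 1, −1, 1, 0)`. -/
theorem bell_row_three_pow_add_one (g : PowerSeries (ZMod 3))
    (hg0 : coeff 0 g = 1)
    (hg : d⁄dX (ZMod 3) g = g ^ 2)
    (i : ℕ) (hi : 1 ≤ i) (k : ℕ) (hk1 : 1 ≤ k) (hk : k ≤ 3 ^ i) :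
    coeff (3 ^ i - k) (g ^ k) = (-1) ^ (k + 1) :=
  bell_row_three_pow_add_one_general g hg0 hg i k hk1 hk
end
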